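/- arXiv:1010.2606 — 2 statements merged into one kernel-verified Lean document; each statement's English description precedes it below -/
import Mathlib

section
/- Fix x ∈ X and let B be a symmetric A-like matrix for Q_D such that B_{xy} = 0 for all y ∈ X. Then B = 0. -/
open Matrix BigOperators Finset

/-- Vertex set of the `D`-dimensional hypercube. -/
abbrev Vx (D : ℕ) := Fin D → Fin 2

/-- Number of coordinates at which `x` and `y` differ (Hamming distance). -/
def hamming {D : ℕ} (x y : Vx D) : ℕ :=
  (Finset.univ.filter (fun i => x i ≠ y i)).card

/-- Adjacency matrix of the hypercube `Q_D`. -/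
noncomputable def adjA (D : ℕ) : Matrix (Vx D) (Vx D) ℝ :=
  fun x y => if hamming x y = 1 then 1 else 0

/-- The `i`-adjacency matrix `α_i`. -/
noncomputable def alpha {D : ℕ} (i : Fin D) : Matrix (Vx D) (Vx D) ℝ :=
  fun x y => if (x i ≠ y i ∧ ∀ j, j ≠ i → x j = y j) then 1 else 0

/-- The diagonal matrix `α*_i` with `(x,x)`-entry `(-1)^(x_i)`. -/
noncomputable def alphaStar {D : ℕ} (i : Fin D) : Matrix (Vx D) (Vx D) ℝ :=
  Matrix.diagonal (fun x => (-1 : ℝ) ^ ((x i : ℕ)))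

lemma fin2_eq : ∀ a b c : Fin 2, a ≠ b → a ≠ c → b = c := by decide

lemma hamming_comm {D : ℕ} (x y : Vx D) : hamming x y = hamming y x := by
  unfold hamming
  congr 1
  ext k
  simp [ne_comm]

lemma hamming_eq_zero {D : ℕ} (x y : Vx D) : hamming x y = 0 ↔ x = y := by
  simp [hamming, Finset.card_eq_zero, Finset.filter_eq_empty_iff, funext_iff]

lemma hamming_eq_one {D : ℕ} (x y : Vx D) :
    hamming x y = 1 ↔ ∃ i, x i ≠ y i ∧ ∀ k, k ≠ i → x k = y k := by
  unfold hamming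
  rw [Finset.card_eq_one]
  constructor
  · rintro ⟨i, hi⟩
    refine ⟨i, ?_, ?_⟩
    · have : i ∈ Finset.univ.filter (fun k => x k ≠ y k) := by rw [hi]; simp
      simpa using this
    · intro k hk
      by_contra h
      have : k ∈ Finset.univ.filter (fun k => x k ≠ y k) := by simp [h]
      rw [hi] at this
      simp at this
      exact hk this
  · rintro ⟨i, hi, ho⟩
    refine ⟨i, ?_⟩
    ext k
    simp only [Finset.mem_filter, Finset.mem_univ, true_and, Finset.mem_singleton]
    constructor
    · intro h
      by_contra hk
      exact h (ho k hk)
    · rintro rfl; exact hi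

lemma two_le_hamming {D : ℕ} {x y : Vx D} {i j : Fin D} (hij : i ≠ j)
    (hi : x i ≠ y i) (hj : x j ≠ y j) : 2 ≤ hamming x y := by
  have hsub : ({i, j} : Finset (Fin D)) ⊆ Finset.univ.filter (fun k => x k ≠ y k) := by
    intro k hk
    simp only [Finset.mem_insert, Finset.mem_singleton] at hk
    rcases hk with rfl | rfl <;> simp [hi, hj]
  calc 2 = ({i, j} : Finset (Fin D)).card := (Finset.card_pair hij).symm
    _ ≤ _ := Finset.card_le_card hsub

lemma key {D : ℕ} (B : Matrix (Vx D) (Vx D) ℝ)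
    (hcomm : B * adjA D = adjA D * B)
    (hvan : ∀ x y : Vx D, 2 ≤ hamming x y → B x y = 0)
    (hsym : Bᵀ = B)
    (u : Vx D) (hu : ∀ y, B u y = 0)
    (a : Vx D) (hua : hamming u a = 1) : ∀ z, B a z = 0 := by
  obtain ⟨i, hi, hio⟩ := (hamming_eq_one u a).1 hua
  have hBsym : ∀ p q, B p q = B q p := by
    intro p q
    conv_lhs => rw [← hsym]
    rfl
  have hBau : B a u = 0 := by rw [hBsym]; exact hu a
  have hcomm' : ∀ p q, ∑ w, adjA D p w * B w q = ∑ w, B p w * adjA D w q := by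
    intro p q
    have h1 : (B * adjA D) p q = (adjA D * B) p q := by rw [hcomm]
    rw [Matrix.mul_apply, Matrix.mul_apply] at h1
    exact h1.symm
  have hrow : ∀ q, ∑ w, adjA D u w * B w q = 0 := by
    intro q
    rw [hcomm' u q]
    simp [hu]
  -- if w is a neighbour of u flipping coordinate i, then w = a
  have hflip : ∀ (w : Vx D), u i ≠ w i → (∀ m, m ≠ i → u m = w m) → w = a := by
    intro w hk hko
    funext m
    by_cases hm : m = i
    · rw [hm]; exact fin2_eq (u i) (w i) (a i) hk hi
    · rw [← hko m hm, hio m hm]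
  -- diagonal entry at a
  have hdiag : B a a = 0 := by
    have h0 := hrow a
    have hsum : ∑ w, adjA D u w * B w a = B a a := by
      rw [← Finset.sum_subset (Finset.subset_univ {a})]
      · simp [adjA, hua]
      · intro w _ hw
        simp only [Finset.mem_singleton] at hw
        by_cases h1 : hamming u w = 1
        · obtain ⟨k, hk, hko⟩ := (hamming_eq_one u w).1 h1
          have hki : k ≠ i := by
            intro hh
            apply hw
            apply hflip w
            · rw [← hh]; exact hk
            · intro m hm; exact hko m (by rw [hh]; exact hm)
          have h2 : 2 ≤ hamming w a := by
            refine two_le_hamming hki ?_ ?_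
            · rw [← hio k hki]; exact fun h => hk h.symm
            · rw [← hko i (fun hh => hki hh.symm)]; exact hi
          rw [hvan w a h2, mul_zero]
        · simp [adjA, h1]
    rw [hsum] at h0
    exact h0
  intro z
  rcases Nat.lt_or_ge (hamming a z) 2 with hlt | hge
  · interval_cases h : hamming a z
    · rw [← (hamming_eq_zero a z).1 h]; exact hdiag
    · by_cases hzu : z = u
      · rw [hzu]; exact hBau
      obtain ⟨j, hj, hjo⟩ := (hamming_eq_one a z).1 h
      have hji : j ≠ i := by
        intro hh
        apply hzu
        funext m
        by_cases hm : m = i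
        · rw [hm]
          have hj' : a i ≠ z i := by rw [← hh]; exact hj
          exact fin2_eq (a i) (z i) (u i) hj' (fun h2 => hi h2.symm)
        · have hm' : m ≠ j := by rw [hh]; exact hm
          rw [← hjo m hm', ← hio m hm]
      have hij : i ≠ j := fun hh => hji hh.symm
      -- coordinate facts
      have hzi : z i = a i := (hjo i hij).symm
      have haj : a j = u j := (hio j hji).symm
      have hzju : u j ≠ z j := by rw [← haj]; exact hj
      have hziu : u i ≠ z i := by rw [hzi]; exact hi
      have hzk : ∀ m, m ≠ i → m ≠ j → z m = u m := by
        intro m hmi hmj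
        rw [← hjo m hmj, ← hio m hmi]
      set c : Vx D := fun k => if k = j then z j else u k with hc
      have hcj : c j = z j := by simp [hc]
      have hck : ∀ m, m ≠ j → c m = u m := by intro m hm; simp [hc, hm]
      have huc : hamming u c = 1 := by
        rw [hamming_eq_one]
        exact ⟨j, by rw [hcj]; exact hzju, fun m hm => (hck m hm).symm⟩
      have hzc : hamming z c = 1 := by
        rw [hamming_eq_one]
        refine ⟨i, ?_, ?_⟩
        · rw [hck i hij]; exact fun hh => hziu hh.symm
        · intro m hm
          by_cases hmj : m = j
          · rw [hmj, hcj]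
          · rw [hck m hmj, hzk m hm hmj]
      have hac : a ≠ c := by
        intro hh
        apply hi
        have h2 := congrFun hh i
        rw [hck i hij] at h2
        exact h2.symm
      have huz : u ≠ z := fun hh => hzu hh.symm
      -- w neighbour of u flipping coordinate j implies w = c
      have hflipc : ∀ (w : Vx D), u j ≠ w j → (∀ m, m ≠ j → u m = w m) → w = c := by
        intro w hk hko
        funext m
        by_cases hm : m = j
        · rw [hm, hcj]; exact fin2_eq (u j) (w j) (z j) hk hzju
        · rw [← hko m hm, hck m hm]
      -- Step 2: B a z + B c z = 0
      have step2 : B a z + B c z = 0 := by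
        have h0 := hrow z
        have hsum : ∑ w, adjA D u w * B w z = B a z + B c z := by
          rw [← Finset.sum_subset (Finset.subset_univ {a, c})]
          · rw [Finset.sum_pair hac]
            simp [adjA, hua, huc]
          · intro w _ hw
            simp only [Finset.mem_insert, Finset.mem_singleton, not_or] at hw
            obtain ⟨hwa, hwc⟩ := hw
            by_cases h1 : hamming u w = 1
            · obtain ⟨k, hk, hko⟩ := (hamming_eq_one u w).1 h1
              have hki : k ≠ i := by
                intro hh
                exact hwa (hflip w (by rw [← hh]; exact hk)
                  (fun m hm => hko m (by rw [hh]; exact hm)))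
              have hkj : k ≠ j := by
                intro hh
                exact hwc (hflipc w (by rw [← hh]; exact hk)
                  (fun m hm => hko m (by rw [hh]; exact hm)))
              have h2 : 2 ≤ hamming w z := by
                refine two_le_hamming hij ?_ ?_
                · rw [← hko i (fun hh => hki hh.symm)]; exact hziu
                · rw [← hko j (fun hh => hkj hh.symm)]; exact hzju
              rw [hvan w z h2, mul_zero]
            · simp [adjA, h1]
        rw [hsum] at h0
        exact h0
      -- Step 3: B a z = B z c
      have step3 : B a z = B z c := by
        have h0 := (hcomm' a c).symm
        have hL : ∑ w, B a w * adjA D w c = B a u + B a z := by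
          rw [← Finset.sum_subset (Finset.subset_univ {u, z})]
          · rw [Finset.sum_pair huz]
            have h1 : adjA D u c = 1 := by simp [adjA, huc]
            have h2 : adjA D z c = 1 := by simp [adjA, hzc]
            rw [h1, h2, mul_one, mul_one]
          · intro w _ hw
            simp only [Finset.mem_insert, Finset.mem_singleton, not_or] at hw
            obtain ⟨hwu, hwz⟩ := hw
            by_cases h1 : hamming w c = 1
            · obtain ⟨k, hk, hko⟩ := (hamming_eq_one w c).1 h1
              -- k = j would give w = u
              have hkj : k ≠ j := by
                intro hh
                apply hwu
                have hk' : w j ≠ c j := by rw [← hh]; exact hk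
                have hko' : ∀ m, m ≠ j → w m = c m := fun m hm =>
                  hko m (by rw [hh]; exact hm)
                funext m
                by_cases hm : m = j
                · rw [hm]
                  rw [hcj] at hk'
                  exact fin2_eq (z j) (w j) (u j) (fun h2 => hk' h2.symm)
                    (fun h2 => hzju h2.symm)
                · rw [hko' m hm, hck m hm]
              -- k = i would give w = z
              have hki : k ≠ i := by
                intro hh
                apply hwz
                have hk' : w i ≠ c i := by rw [← hh]; exact hk
                have hko' : ∀ m, m ≠ i → w m = c m := fun m hm =>
                  hko m (by rw [hh]; exact hm)
                funext m
                by_cases hm : m = i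
                · rw [hm]
                  rw [hck i hij] at hk'
                  exact fin2_eq (u i) (w i) (z i) (fun h2 => hk' h2.symm) hziu
                · rw [hko' m hm]
                  by_cases hmj : m = j
                  · rw [hmj, hcj]
                  · rw [hck m hmj, hzk m hm hmj]
              have h2 : 2 ≤ hamming a w := by
                refine two_le_hamming hij ?_ ?_
                · rw [hko i (fun hh => hki hh.symm), hck i hij]
                  exact fun h2 => hi h2.symm
                · rw [hko j (fun hh => hkj hh.symm), hcj]
                  exact hj
              rw [hvan a w h2, zero_mul]
            · simp [adjA, h1]
        have hR : ∑ w, adjA D a w * B w c = B u c + B z c := by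
          rw [← Finset.sum_subset (Finset.subset_univ {u, z})]
          · rw [Finset.sum_pair huz]
            have h1 : adjA D a u = 1 := by
              simp [adjA, hamming_comm a u, hua]
            have h2 : adjA D a z = 1 := by simp [adjA, h]
            rw [h1, h2, one_mul, one_mul]
          · intro w _ hw
            simp only [Finset.mem_insert, Finset.mem_singleton, not_or] at hw
            obtain ⟨hwu, hwz⟩ := hw
            by_cases h1 : hamming a w = 1
            · obtain ⟨k, hk, hko⟩ := (hamming_eq_one a w).1 h1
              -- k = i would give w = u
              have hki : k ≠ i := by
                intro hh
                apply hwu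
                have hk' : a i ≠ w i := by rw [← hh]; exact hk
                have hko' : ∀ m, m ≠ i → a m = w m := fun m hm =>
                  hko m (by rw [hh]; exact hm)
                funext m
                by_cases hm : m = i
                · rw [hm]
                  exact fin2_eq (a i) (w i) (u i) hk' (fun h2 => hi h2.symm)
                · rw [← hko' m hm, ← hio m hm]
              -- k = j would give w = z
              have hkj : k ≠ j := by
                intro hh
                apply hwz
                have hk' : a j ≠ w j := by rw [← hh]; exact hk
                have hko' : ∀ m, m ≠ j → a m = w m := fun m hm =>
                  hko m (by rw [hh]; exact hm)
                funext m
                by_cases hm : m = j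
                · rw [hm]
                  exact fin2_eq (a j) (w j) (z j) hk' hj
                · rw [← hko' m hm, hjo m hm]
              have h2 : 2 ≤ hamming w c := by
                refine two_le_hamming hij ?_ ?_
                · rw [← hko i (fun hh => hki hh.symm), hck i hij]
                  exact fun h2 => hi h2.symm
                · rw [← hko j (fun hh => hkj hh.symm), hcj, haj]
                  exact hzju
              rw [hvan w c h2, mul_zero]
            · simp [adjA, h1]
        rw [hL, hR, hBau, zero_add, hu c, zero_add] at h0
        exact h0
      have step4 : B c z = B z c := hBsym c z
      have hfin : B a z + B a z = 0 := by
        nth_rewrite 2 [step3]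
        rw [← step4]
        exact step2
      linarith
  · exact hvan a z hge

theorem sym_Alike_vanishing_row (D : ℕ) (hD : 0 < D) (B : Matrix (Vx D) (Vx D) ℝ)
    (hcomm : B * adjA D = adjA D * B)
    (hvan : ∀ x y : Vx D, 2 ≤ hamming x y → B x y = 0)
    (hsym : Bᵀ = B)
    (x : Vx D) (hx : ∀ y : Vx D, B x y = 0) :
    B = 0 := by
  have main : ∀ n (y : Vx D), hamming x y = n → ∀ z, B y z = 0 := by
    intro n
    induction n with
    | zero =>
      intro y hy z
      rw [← (hamming_eq_zero x y).1 hy]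
      exact hx z
    | succ n ih =>
      intro y hy z
      have hpos : 0 < (Finset.univ.filter (fun k => x k ≠ y k)).card := by
        rw [show (Finset.univ.filter (fun k => x k ≠ y k)).card = hamming x y from rfl, hy]
        omega
      obtain ⟨i, hi⟩ := Finset.card_pos.1 hpos
      simp only [Finset.mem_filter, Finset.mem_univ, true_and] at hi
      set y' : Vx D := fun k => if k = i then x i else y k with hy'
      have hy'i : y' i = x i := by simp [hy']
      have hy'k : ∀ m, m ≠ i → y' m = y m := by intro m hm; simp [hy', hm]
      have hxy' : hamming x y' = n := by
        have hfil : Finset.univ.filter (fun k => x k ≠ y' k)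
            = (Finset.univ.filter (fun k => x k ≠ y k)).erase i := by
          ext k
          simp only [Finset.mem_filter, Finset.mem_univ, true_and, Finset.mem_erase]
          constructor
          · intro hk
            have hki : k ≠ i := by
              intro hh
              apply hk
              rw [hh, hy'i]
            rw [hy'k k hki] at hk
            exact ⟨hki, hk⟩
          · rintro ⟨hki, hk⟩
            rw [hy'k k hki]
            exact hk
        unfold hamming
        rw [hfil, Finset.card_erase_of_mem (by simp [hi]),
          show (Finset.univ.filter (fun k => x k ≠ y k)).card = hamming x y from rfl, hy]
        omega
      have hy'y : hamming y' y = 1 := by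
        rw [hamming_eq_one]
        refine ⟨i, ?_, fun m hm => hy'k m hm⟩
        rw [hy'i]; exact hi
      exact key B hcomm hvan hsym y' (ih y' hxy') y hy'y z
  ext y z
  simpa using main (hamming x y) y rfl z
end

section
/- For 1 ≤ i < j ≤ D, the matrix B_{ij} := α*_i A α*_j − α*_j A α*_i satisfies B_{ij} = 2 α*_i α*_j (α_i − α_j). -/
open Matrix BigOperators Finset

lemma hamming_eq_one_iff {D : ℕ} {x y : Vx D} :
    hamming x y = 1 ↔ ∃ k, x k ≠ y k ∧ ∀ l, l ≠ k → x l = y l := by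
  rw [hamming, Finset.card_eq_one]
  constructor
  · rintro ⟨k, hk⟩
    refine ⟨k, ?_, ?_⟩
    · have : k ∈ Finset.univ.filter (fun i => x i ≠ y i) := by
        rw [hk]; exact Finset.mem_singleton_self k
      simpa using this
    · intro l hl
      by_contra hne
      have : l ∈ Finset.univ.filter (fun i => x i ≠ y i) := by
        simp [hne]
      rw [hk] at this
      exact hl (Finset.mem_singleton.mp this)
  · rintro ⟨k, hk, hall⟩
    refine ⟨k, ?_⟩
    ext l
    simp only [Finset.mem_filter, Finset.mem_univ, true_and, Finset.mem_singleton]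
    constructor
    · intro hne; by_contra h; exact hne (hall l h)
    · rintro rfl; exact hk

lemma neg_one_pow_ne {a b : Fin 2} (h : a ≠ b) :
    ((-1 : ℝ)) ^ (b : ℕ) = -((-1 : ℝ)) ^ (a : ℕ) := by
  have ha := a.isLt; have hb := b.isLt
  have h' : (a : ℕ) ≠ (b : ℕ) := fun hh => h (Fin.ext hh)
  interval_cases h1 : (a : ℕ) <;> interval_cases h2 : (b : ℕ) <;> simp_all

theorem Bij_formula (D : ℕ) (hD : 0 < D) (i j : Fin D) (hij : i < j) :
    alphaStar i * adjA D * alphaStar j - alphaStar j * adjA D * alphaStar i =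
      (2 : ℝ) • (alphaStar i * alphaStar j * (alpha i - alpha j)) := by
  ext x y
  have L : ∀ (a b : Fin D), (alphaStar a * adjA D * alphaStar b) x y
      = (-1 : ℝ) ^ (x a : ℕ) * adjA D x y * (-1 : ℝ) ^ (y b : ℕ) := by
    intro a b
    simp [alphaStar, Matrix.mul_diagonal, Matrix.diagonal_mul, mul_comm, mul_assoc, mul_left_comm]
  have R : (alphaStar i * alphaStar j * (alpha i - alpha j)) x y
      = (-1 : ℝ) ^ (x i : ℕ) * (-1 : ℝ) ^ (x j : ℕ) * (alpha i x y - alpha j x y) := by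
    simp [alphaStar, Matrix.diagonal_mul_diagonal, Matrix.diagonal_mul, Matrix.sub_apply,
      mul_assoc]
  simp only [Matrix.sub_apply, Matrix.smul_apply, L, R, smul_eq_mul]
  by_cases hA : hamming x y = 1
  · obtain ⟨k, hk, hall⟩ := hamming_eq_one_iff.mp hA
    have hAxy : adjA D x y = 1 := by simp [adjA, hA]
    by_cases hki : k = i
    · subst hki
      have hxyj : x j = y j := hall j hij.ne'
      have hai : alpha k x y = 1 := by rw [alpha]; exact if_pos ⟨hk, hall⟩
      have haj : alpha j x y = 0 := by
        rw [alpha, if_neg]; rintro ⟨h1, _⟩; exact h1 hxyj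
      rw [hAxy, hai, haj, hxyj, neg_one_pow_ne hk]
      ring
    · by_cases hkj : k = j
      · subst hkj
        have hxyi : x i = y i := hall i hij.ne
        have haj : alpha k x y = 1 := by rw [alpha]; exact if_pos ⟨hk, hall⟩
        have hai : alpha i x y = 0 := by
          rw [alpha, if_neg]; rintro ⟨h1, _⟩; exact h1 hxyi
        rw [hAxy, hai, haj, hxyi, neg_one_pow_ne hk]
        ring
      · have hxyi : x i = y i := hall i (Ne.symm hki)
        have hxyj : x j = y j := hall j (Ne.symm hkj)
        have hai : alpha i x y = 0 := by
          rw [alpha, if_neg]; rintro ⟨h1, _⟩; exact h1 hxyi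
        have haj : alpha j x y = 0 := by
          rw [alpha, if_neg]; rintro ⟨h1, _⟩; exact h1 hxyj
        rw [hAxy, hai, haj, hxyi, hxyj]
        ring
  · have hAxy : adjA D x y = 0 := by simp [adjA, hA]
    have hai : alpha i x y = 0 := by
      rw [alpha]
      rw [if_neg]
      rintro ⟨h1, h2⟩
      exact hA (hamming_eq_one_iff.mpr ⟨i, h1, h2⟩)
    have haj : alpha j x y = 0 := by
      rw [alpha]
      rw [if_neg]
      rintro ⟨h1, h2⟩
      exact hA (hamming_eq_one_iff.mpr ⟨j, h1, h2⟩)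
    simp [hAxy, hai, haj]
end
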